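/- Let P be a reducible lossy VASS whose control flow graph is a single strongly connected component with a unique entry location l_0 that is also its unique exit point, let 𝒯 = CFA(P) contain one transition τ_π = c_π for each loop-path π of P, and suppose the enumeration τ_1,…,τ_k of 𝒯 together with variables y_1,…,y_k satisfies the ranking condition. Fix an initial valuation σ_0 and define Bound(τ_i) recursively by Bound(τ_i) = ( σ_0(y_i) + Σ_{j : τ_j(y_i) > 0} Bound(τ_j) · τ_j(y_i) ) / k_i, where k_i = −τ_i(y_i) > 0 and τ(y) denotes the component of the vector τ corresponding to variable y (this recursion is well-founded, since any τ_j with τ_j(y_i) > 0 satisfies j < i). Then for every i and every finite trace of P that starts at (l_0, σ_0) and ends at location l_0, the underlying path contains at most Bound(τ_i) instances of the loop-path π_i from which τ_i was obtained; i.e., Bound(τ_i) is a path-bound for π_i. -/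

import Mathlib

open scoped BigOperators

/-- Update vectors in `ℤⁿ`. -/
abbrev Upd (n : ℕ) := Fin n → ℤ

/-- Valuations of the variables (values are natural numbers). -/
abbrev Valu (n : ℕ) := Fin n → ℕ

/-- An edge (transition) of a VASS: source location, update vector, target location. -/
abbrev VEdge (n : ℕ) (L : Type*) := L × Upd n × L

/-- A lossy vector addition system with states over `n` variables and locations `L`. -/
structure VASS (n : ℕ) (L : Type*) where
  E : Set (VEdge n L)

namespace VASS

variable {n : ℕ} {L : Type*}

/-- `FPath P a p b`: the list of edges `p` is a finite path of `P` from `a` to `b`. -/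
inductive FPath (P : VASS n L) : L → List (VEdge n L) → L → Prop
  | nil (a : L) : FPath P a [] a
  | cons {a b c : L} {d : Upd n} {p : List (VEdge n L)} :
      (a, d, b) ∈ P.E → FPath P b p c → FPath P a ((a, d, b) :: p) c

/-- `x` occurs among the locations of the path `p` starting at location `a`. -/
def Visits (a : L) (p : List (VEdge n L)) (x : L) : Prop :=
  x = a ∨ ∃ e ∈ p, e.2.2 = x

/-- `a` dominates `b` (w.r.t. the entry location):
every path from the entry to `b` includes `a`. -/
def Dominates (P : VASS n L) (entry a b : L) : Prop :=
  ∀ p : List (VEdge n L), P.FPath entry p b → Visits entry p a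

/-- An edge `l₁ → l₂` is a back edge if `l₂` dominates `l₁`. -/
def BackEdge (P : VASS n L) (entry : L) (e : VEdge n L) : Prop :=
  e ∈ P.E ∧ P.Dominates entry e.2.2 e.1

/-- All locations are reachable from the entry location. -/
def EntryReach (P : VASS n L) (entry : L) : Prop :=
  ∀ x : L, ∃ p, P.FPath entry p x

/-- `P` is reducible: the graph becomes acyclic after removing all back edges. -/
def Reducible (P : VASS n L) (entry : L) : Prop :=
  ∀ (a : L) (p : List (VEdge n L)), (∀ e ∈ p, ¬ P.BackEdge entry e) → P.FPath a p a → p = []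

/-- `h` is a loop header: the target of some back edge. -/
def LoopHeader (P : VASS n L) (entry h : L) : Prop :=
  ∃ e, P.BackEdge entry e ∧ e.2.2 = h

/-- The natural loop of the loop header `h`: all locations `x` dominated by `h` such that
there is a back edge `m → h` and a path from `x` to `m` that does not contain `h`. -/
def NaturalLoop (P : VASS n L) (entry h : L) : Set L :=
  {x | P.Dominates entry h x ∧ ∃ e, P.BackEdge entry e ∧ e.2.2 = h ∧
    ∃ p, P.FPath x p e.1 ∧ ∀ e' ∈ p, e'.2.2 ≠ h}

/-- `p` is a loop-path at loop header `l`: a simple cyclic path starting and ending at `l`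
that visits only locations inside the natural loop of `l`. -/
def LoopPath (P : VASS n L) (entry l : L) (p : List (VEdge n L)) : Prop :=
  P.LoopHeader entry l ∧ P.FPath l p l ∧ p ≠ [] ∧ (p.map Prod.fst).Nodup ∧
    ∀ x, Visits l p x → x ∈ P.NaturalLoop entry l

/-- The contracted update of a path: the sum of the update vectors along the path. -/
def contractUpd (p : List (VEdge n L)) : Upd n :=
  (p.map (fun e => e.2.1)).sum

/-- Control flow abstraction: the transition system containing the contracted update
of every loop-path of `P`. -/
def CFA (P : VASS n L) (entry : L) : Set (Upd n) :=
  {c | ∃ l p, P.LoopPath entry l p ∧ c = contractUpd p}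

/-- `InstanceAux P h π ν D`: `ν` is an instance of the loop-path `π` (whose header is `h`),
interleaving the designated transitions of `π` with cyclic filler paths avoiding `h`;
`D` is the set of positions in `ν` of the designated transitions of `π`. -/
inductive InstanceAux (P : VASS n L) (h : L) :
    List (VEdge n L) → List (VEdge n L) → Set ℕ → Prop
  | single (e : VEdge n L) : InstanceAux P h [e] [e] {0}
  | cons (e : VEdge n L) (q rest ν : List (VEdge n L)) (D : Set ℕ) :
      P.FPath e.2.2 q e.2.2 → e.2.2 ≠ h → (∀ e' ∈ q, e'.2.2 ≠ h) →
      InstanceAux P h rest ν D →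
      InstanceAux P h (e :: rest) (e :: (q ++ ν)) (insert 0 ((fun m => m + q.length + 1) '' D))

/-- `ν` is an instance of the loop-path `π`, with `D` the positions of the
designated transitions of `π` inside `ν`. -/
def IsInstance (P : VASS n L) (π ν : List (VEdge n L)) (D : Set ℕ) : Prop :=
  ∃ e rest, π = e :: rest ∧ P.InstanceAux e.1 π ν D

/-- The path `p` contains an instance of `π` starting at position `i` and of length `k`. -/
def InstanceAt (P : VASS n L) (π p : List (VEdge n L)) (i k : ℕ) : Prop :=
  i + k ≤ p.length ∧ 1 ≤ k ∧ ∃ D, P.IsInstance π ((p.drop i).take k) D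

/-- The number of instances of the loop-path `π` contained in the path `p`. -/
noncomputable def numInstances (P : VASS n L) (π p : List (VEdge n L)) : ℕ :=
  {q : ℕ × ℕ | P.InstanceAt π p q.1 q.2}.ncard

/-- The transition occurrence at position `t` of the path `p` belongs to the instance of
the loop-path `π` contained in `p` at position `i` with length `k` (i.e. `t` is one of the
designated transitions of that instance). -/
def BelongsAt (P : VASS n L) (π p : List (VEdge n L)) (i k t : ℕ) : Prop :=
  i + k ≤ p.length ∧ 1 ≤ k ∧ i ≤ t ∧ t < i + k ∧
    ∃ D, P.IsInstance π ((p.drop i).take k) D ∧ (t - i) ∈ D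

/-- An infinite trace of the VASS `P`. -/
def InfTrace (P : VASS n L) (locs : ℕ → L) (upds : ℕ → Upd n) (vals : ℕ → Valu n) : Prop :=
  ∀ i, (locs i, upds i, locs (i+1)) ∈ P.E ∧
    ∀ j, (vals (i+1) j : ℤ) ≤ (vals i j : ℤ) + upds i j

/-- `P` is terminating: it has no infinite trace. -/
def Terminating (P : VASS n L) : Prop :=
  ¬ ∃ locs upds vals, P.InfTrace locs upds vals

/-- The valuations `vals` form a trace of `P` along the finite path `p`. -/
def FinTraceVals (P : VASS n L) (p : List (VEdge n L)) (vals : ℕ → Valu n) : Prop :=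
  ∀ (i : ℕ) (hi : i < p.length), ∀ j,
    (vals (i+1) j : ℤ) ≤ (vals i j : ℤ) + (p.get ⟨i, hi⟩).2.1 j

end VASS

/-- An enumeration `τ₁,…,τ_k` of the transition system `T` together with variables
`y₁,…,y_k` satisfies the ranking condition of the `Ranking` algorithm:
`τᵢ ⊨ yᵢ' < yᵢ`, and `τⱼ ⊨ yᵢ' ≤ yᵢ` for all `j ≥ i`. -/
def RankingCondition {n : ℕ} (T : Set (Upd n)) {k : ℕ}
    (τ : Fin k → Upd n) (y : Fin k → Fin n) : Prop :=
  Function.Injective τ ∧ Set.range τ = T ∧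
    (∀ i, τ i (y i) < 0) ∧ ∀ i j : Fin k, i ≤ j → τ j (y i) ≤ 0

/-- An infinite lossy execution of the transition system `T`. -/
def LossyExec {n : ℕ} (T : Set (Upd n)) (v : ℕ → Valu n) (d : ℕ → Upd n) : Prop :=
  ∀ m, d m ∈ T ∧ ∀ j, (v (m+1) j : ℤ) ≤ (v m j : ℤ) + d m j

/-- A finite lossy execution `v 0, …, v N` of the transition system `T`. -/
def FinLossyExec {n : ℕ} (T : Set (Upd n)) (N : ℕ) (v : ℕ → Valu n) (d : ℕ → Upd n) : Prop :=
  ∀ m < N, d m ∈ T ∧ ∀ j, (v (m+1) j : ℤ) ≤ (v m j : ℤ) + d m j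

/-- The bound computed by the `Bound` algorithm for transition `τ i`:
`Bound(τᵢ) = (σ₀(yᵢ) + Σ_{j : τⱼ(yᵢ) > 0} Bound(τⱼ) · τⱼ(yᵢ)) / kᵢ` with `kᵢ = −τᵢ(yᵢ)`
(the recursion runs over `j < i`, which under the ranking condition coincides with the
set of `j` with `τⱼ(yᵢ) > 0`, since any `τⱼ` with `τⱼ(yᵢ) > 0` satisfies `j < i`). -/
noncomputable def RankBound {n k : ℕ} (τ : Fin k → Upd n) (y : Fin k → Fin n)
    (σ0 : Valu n) : Fin k → ℚ
  | i =>
    ((σ0 (y i) : ℚ) +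
      ∑ j ∈ (Finset.univ.filter (fun j : Fin k => j < i ∧ 0 < τ j (y i))).attach,
        RankBound τ y σ0 j.1 * ((τ j.1 (y i) : ℚ))) / ((-(τ i (y i)) : ℤ) : ℚ)
  termination_by i => i.1
  decreasing_by
    have hj := j.2
    simp only [Finset.mem_filter, Finset.mem_univ, true_and] at hj
    exact hj.1

/-!
Every cycle of a reducible VASS is an `ℕ`-combination of elements of `CFA P`. A simple cycle
contains a back edge, because the graph without back edges is acyclic; rotated to start at the
target `w` of that edge it is a loop-path at `w`, since `w` dominates the source of the back edge
and hence every location of the cycle. A cycle that is not simple splits at a repeated location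
into two shorter cycles.

An instance of `π` is a first return to the header of `π`, so distinct instances in a path do not
overlap, and cutting them out one at a time shows that each contributes `c_π` plus the updates of
its filler cycles. Hence the update of the path `p` is `∑ⱼ cⱼ τⱼ` with `cᵢ` at least the number of
instances of `πᵢ`, and since the trace keeps every variable nonnegative, `σ₀ + ∑ⱼ cⱼ τⱼ ≥ 0`. In
coordinate `yᵢ` the `τⱼ` with `j ≥ i` do not increase `yᵢ` and `τᵢ` decreases it by `kᵢ`, so
`cᵢ kᵢ ≤ σ₀(yᵢ) + ∑_{j < i, τⱼ(yᵢ) > 0} cⱼ τⱼ(yᵢ)`, and induction on `i` gives `cᵢ ≤ Bound(τᵢ)`.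
-/

theorem List.exists_eq_append_cons_append_cons_of_not_nodup_map {α β : Type*}
    {f : α → β} {l : List α} (h : ¬(l.map f).Nodup) :
    ∃ l₁ x l₂ y l₃, l = l₁ ++ x :: (l₂ ++ y :: l₃) ∧ f x = f y := by
  rw [List.Nodup, List.pairwise_map, List.pairwise_iff_forall_sublist] at h
  push Not at h
  obtain ⟨x, y, hxy, hfxy⟩ := h
  obtain ⟨r₁, r₂, rfl, hx, hy⟩ := List.cons_sublist_iff.1 hxy
  obtain ⟨l₁, l₂, rfl⟩ := List.append_of_mem hx
  obtain ⟨l₂', l₃, rfl⟩ := List.append_of_mem (List.singleton_sublist.1 hy)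
  exact ⟨l₁, x, l₂ ++ l₂', y, l₃, by simp, hfxy⟩

namespace VASS

variable {n : ℕ} {L : Type*} {P : VASS n L}

@[simp]
theorem contractUpd_nil : contractUpd ([] : List (VEdge n L)) = 0 := rfl

@[simp]
theorem contractUpd_cons (e : VEdge n L) (p : List (VEdge n L)) :
    contractUpd (e :: p) = e.2.1 + contractUpd p := by
  simp [contractUpd]

@[simp]
theorem contractUpd_append (p q : List (VEdge n L)) :
    contractUpd (p ++ q) = contractUpd p + contractUpd q := by
  simp [contractUpd]

theorem contractUpd_perm {p q : List (VEdge n L)} (h : p.Perm q) :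
    contractUpd p = contractUpd q :=
  (h.map _).sum_eq

theorem FPath.cons_iff {a c : L} {e : VEdge n L} {p : List (VEdge n L)} :
    P.FPath a (e :: p) c ↔ e ∈ P.E ∧ e.1 = a ∧ P.FPath e.2.2 p c := by
  constructor
  · rintro (_ | ⟨he, hp⟩)
    exact ⟨he, rfl, hp⟩
  · obtain ⟨a', d, b⟩ := e
    rintro ⟨he, rfl, hp⟩
    exact .cons he hp

theorem FPath.append {a b c : L} {p q : List (VEdge n L)}
    (hp : P.FPath a p b) (hq : P.FPath b q c) : P.FPath a (p ++ q) c := by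
  induction hp with
  | nil => exact hq
  | cons he _ ih => exact .cons he (ih hq)

theorem FPath.append_iff {a c : L} {p q : List (VEdge n L)} :
    P.FPath a (p ++ q) c ↔ ∃ b, P.FPath a p b ∧ P.FPath b q c := by
  refine ⟨fun h => ?_, fun ⟨b, hp, hq⟩ => hp.append hq⟩
  induction p generalizing a with
  | nil => exact ⟨a, .nil a, h⟩
  | cons e p ih =>
    rw [List.cons_append, cons_iff] at h
    obtain ⟨he, rfl, hpq⟩ := h
    obtain ⟨b, hp, hq⟩ := ih hpq
    exact ⟨b, cons_iff.2 ⟨he, rfl, hp⟩, hq⟩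

theorem FPath.singleton {e : VEdge n L} (he : e ∈ P.E) : P.FPath e.1 [e] e.2.2 :=
  cons_iff.2 ⟨he, rfl, .nil _⟩

theorem FPath.endpoints_eq_of_ne_nil {a a' b b' : L} {p : List (VEdge n L)}
    (h : P.FPath a p b) (h' : P.FPath a' p b') (hp : p ≠ []) : a = a' ∧ b = b' := by
  induction h generalizing a' with
  | nil => contradiction
  | cons _ hq ih =>
    obtain ⟨-, rfl, hq'⟩ := cons_iff.1 h'
    rcases hq with _ | _
    · cases hq'
      exact ⟨rfl, rfl⟩
    · exact ⟨rfl, (ih hq' (List.cons_ne_nil _ _)).2⟩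

theorem FPath.fst_head {a b : L} {p : List (VEdge n L)}
    (h : P.FPath a p b) (hp : p ≠ []) : (p.head hp).1 = a := by
  cases h with
  | nil => contradiction
  | cons => rfl

theorem FPath.getLast_target {a b : L} {p : List (VEdge n L)}
    (h : P.FPath a p b) (hp : p ≠ []) : (p.getLast hp).2.2 = b := by
  induction h with
  | nil => contradiction
  | cons _ hq ih =>
    rcases hq with _ | _
    · rfl
    · rw [List.getLast_cons (List.cons_ne_nil _ _)]
      exact ih _

theorem FPath.cons_map_target {a b : L} {p : List (VEdge n L)} (h : P.FPath a p b) :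
    a :: p.map (·.2.2) = p.map Prod.fst ++ [b] := by
  induction h with
  | nil => rfl
  | cons _ _ ih => simp [ih]

theorem FPath.map_fst_tail {a b : L} {p : List (VEdge n L)} (h : P.FPath a p b) :
    p.tail.map Prod.fst = p.dropLast.map (·.2.2) := by
  have := congrArg (fun l => l.dropLast.tail) h.cons_map_target
  simpa [List.tail_dropLast, List.map_dropLast] using this.symm

theorem FPath.exists_suffix_of_visits {a b x : L} {p : List (VEdge n L)}
    (h : P.FPath a p b) (hx : Visits a p x) : ∃ ρ, ρ <:+ p ∧ P.FPath x ρ b := by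
  induction h with
  | nil =>
    obtain rfl | ⟨e, he, -⟩ := hx
    · exact ⟨[], List.nil_suffix, .nil _⟩
    · simp at he
  | @cons a' b' c' d q he hq ih =>
    obtain rfl | ⟨e, he', rfl⟩ := hx
    · exact ⟨_, List.suffix_refl _, .cons he hq⟩
    · obtain ⟨ρ, hρ, hρp⟩ := ih (by
        rcases List.mem_cons.1 he' with rfl | he'
        · exact Or.inl rfl
        · exact Or.inr ⟨e, he', rfl⟩)
      exact ⟨ρ, hρ.trans (List.suffix_cons _ _), hρp⟩

theorem Dominates.of_fpath_avoiding {l0 w u z : L} {ρ : List (VEdge n L)}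
    (hdom : P.Dominates l0 w u) (hρ : P.FPath z ρ u) (hav : ∀ f ∈ ρ, f.2.2 ≠ w) :
    P.Dominates l0 w z := by
  intro q hq
  rcases hdom (q ++ ρ) (hq.append hρ) with h | ⟨e, he, rfl⟩
  · exact .inl h
  · rcases List.mem_append.1 he with he | he
    · exact .inr ⟨e, he, rfl⟩
    · exact absurd rfl (hav e he)

theorem loopPath_append_backEdge {l0 : L} {be : VEdge n L} {t : List (VEdge n L)}
    (hbe : P.BackEdge l0 be) (ht : P.FPath be.2.2 t be.1)
    (hnd : ((t ++ [be]).map Prod.fst).Nodup) : P.LoopPath l0 be.2.2 (t ++ [be]) := by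
  -- the sources of `t ++ [be]` are `be.2.2` followed by the targets of `t`
  have hw : be.2.2 ∉ t.map (·.2.2) := by
    rw [List.map_append, List.map_singleton, ← ht.cons_map_target] at hnd
    exact (List.nodup_cons.1 hnd).1
  refine ⟨⟨be, hbe, rfl⟩, ht.append (.singleton hbe.1), by simp, hnd, fun x hx => ?_⟩
  have hxt : Visits be.2.2 t x := by
    obtain rfl | ⟨e, he, rfl⟩ := hx
    · exact .inl rfl
    · rcases List.mem_append.1 he with he | he
      · exact .inr ⟨e, he, rfl⟩
      · exact .inl (by rw [List.mem_singleton.1 he])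
  obtain ⟨ρ, hρt, hρ⟩ := ht.exists_suffix_of_visits hxt
  have hav : ∀ f ∈ ρ, f.2.2 ≠ be.2.2 := fun f hf hfw =>
    hw (hfw ▸ List.mem_map_of_mem (hρt.subset hf))
  exact ⟨hbe.2.of_fpath_avoiding hρ hav, be, hbe, rfl, ρ, hρ, hav⟩

theorem contractUpd_mem_cfa_of_nodup {l0 v : L} {s : List (VEdge n L)}
    (hred : P.Reducible l0) (hs : P.FPath v s v) (hne : s ≠ [])
    (hnd : (s.map Prod.fst).Nodup) : contractUpd s ∈ P.CFA l0 := by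
  obtain ⟨be, hbes, hbe⟩ : ∃ be ∈ s, P.BackEdge l0 be := by
    by_contra! h
    exact hne (hred v s h hs)
  obtain ⟨s₁, s₂, rfl⟩ := List.append_of_mem hbes
  obtain ⟨u, hs₁, hbes₂⟩ := FPath.append_iff.1 hs
  obtain ⟨-, rfl, hs₂⟩ := FPath.cons_iff.1 hbes₂
  -- rotate the cycle so that it starts at the target of the back edge
  have hperm : (s₁ ++ be :: s₂).Perm (s₂ ++ s₁ ++ [be]) :=
    List.perm_middle.trans <| (List.perm_append_comm.cons be).trans
      (List.perm_append_singleton _ _).symm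
  exact ⟨_, _, loopPath_append_backEdge hbe (hs₂.append hs₁)
    ((hperm.map Prod.fst).nodup_iff.1 hnd), contractUpd_perm hperm⟩

theorem contractUpd_mem_span_cfa {l0 a : L} {c : List (VEdge n L)}
    (hred : P.Reducible l0) (hc : P.FPath a c a) :
    contractUpd c ∈ Submodule.span ℕ (P.CFA l0) := by
  induction hlen : c.length using Nat.strong_induction_on generalizing a c with
  | _ m ih =>
  by_cases hnd : (c.map Prod.fst).Nodup
  · rcases eq_or_ne c [] with rfl | hne
    · exact zero_mem _
    · exact Submodule.subset_span (contractUpd_mem_cfa_of_nodup hred hc hne hnd)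
  -- otherwise split off the subcycle between two visits of a repeated location
  obtain ⟨c₁, x, c₂, y, c₃, rfl, hxy⟩ :=
    List.exists_eq_append_cons_append_cons_of_not_nodup_map hnd
  obtain ⟨b, hc₁, hc'⟩ := FPath.append_iff.1 hc
  obtain ⟨b', hxc₂, hyc₃⟩ := FPath.append_iff.1 (List.cons_append ▸ hc')
  have hb : b = x.1 := (FPath.cons_iff.1 hxc₂).2.1.symm
  have hb' : b' = y.1 := (FPath.cons_iff.1 hyc₃).2.1.symm
  subst hb hb'
  rw [← hxy] at hxc₂ hyc₃
  have hsum : contractUpd (c₁ ++ x :: (c₂ ++ y :: c₃)) =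
      contractUpd (x :: c₂) + contractUpd (c₁ ++ y :: c₃) := by
    simp only [contractUpd_append, contractUpd_cons]
    abel
  rw [hsum]
  have hshorter : (x :: c₂).length < m ∧ (c₁ ++ y :: c₃).length < m := by
    simp only [← hlen, List.length_append, List.length_cons]
    omega
  exact add_mem (ih _ hshorter.1 hxc₂ rfl) (ih _ hshorter.2 (hc₁.append hyc₃) rfl)

theorem InstanceAux.ne_nil {h : L} {π ν : List (VEdge n L)} {D : Set ℕ}
    (hI : P.InstanceAux h π ν D) : ν ≠ [] := by
  cases hI <;> simp

theorem InstanceAux.fpath {h a b : L} {π ν : List (VEdge n L)} {D : Set ℕ}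
    (hI : P.InstanceAux h π ν D) (hπ : P.FPath a π b) : P.FPath a ν b := by
  induction hI generalizing a with
  | single => exact hπ
  | cons e q rest ν D hq _ _ _ ih =>
    obtain ⟨he, rfl, hrest⟩ := FPath.cons_iff.1 hπ
    exact FPath.cons_iff.2 ⟨he, rfl, hq.append (ih hrest)⟩

theorem InstanceAux.target_ne_of_mem_dropLast {h : L} {π ν : List (VEdge n L)} {D : Set ℕ}
    (hI : P.InstanceAux h π ν D) : ∀ f ∈ ν.dropLast, f.2.2 ≠ h := by
  induction hI with
  | single => simp
  | cons e q rest ν D _ hne hq hrest ih =>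
    rw [List.dropLast_cons_of_ne_nil (by simp [hrest.ne_nil]),
      List.dropLast_append_of_ne_nil hrest.ne_nil]
    intro f hf
    rcases List.mem_cons.1 hf with rfl | hf
    · exact hne
    · rcases List.mem_append.1 hf with hf | hf
      · exact hq f hf
      · exact ih f hf

theorem InstanceAux.exists_contractUpd_eq_add {l0 h : L} {π ν : List (VEdge n L)} {D : Set ℕ}
    (hred : P.Reducible l0) (hI : P.InstanceAux h π ν D) :
    ∃ z ∈ Submodule.span ℕ (P.CFA l0), contractUpd ν = contractUpd π + z := by
  induction hI with
  | single => exact ⟨0, zero_mem _, by simp⟩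
  | cons e q rest ν D hq _ _ _ ih =>
    obtain ⟨z, hz, hν⟩ := ih
    refine ⟨contractUpd q + z, add_mem (contractUpd_mem_span_cfa hred hq) hz, ?_⟩
    simp only [contractUpd_cons, contractUpd_append, hν]
    abel

def IsFirstReturn (P : VASS n L) (l : L) (ν : List (VEdge n L)) : Prop :=
  P.FPath l ν l ∧ ν ≠ [] ∧ ∀ f ∈ ν.dropLast, f.2.2 ≠ l

theorem IsInstance.isFirstReturn {l0 l : L} {π ν : List (VEdge n L)} {D : Set ℕ}
    (hπ : P.LoopPath l0 l π) (hI : P.IsInstance π ν D) : P.IsFirstReturn l ν := by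
  obtain ⟨e, rest, rfl, hI⟩ := hI
  have hπl := hπ.2.1
  obtain ⟨-, rfl, -⟩ := FPath.cons_iff.1 hπl
  exact ⟨hI.fpath hπl, hI.ne_nil, hI.target_ne_of_mem_dropLast⟩

theorem IsInstance.exists_contractUpd_eq_add {l0 : L} {π ν : List (VEdge n L)} {D : Set ℕ}
    (hred : P.Reducible l0) (hI : P.IsInstance π ν D) :
    ∃ z ∈ Submodule.span ℕ (P.CFA l0), contractUpd ν = contractUpd π + z := by
  obtain ⟨e, rest, rfl, hI⟩ := hI
  exact hI.exists_contractUpd_eq_add hred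

theorem IsFirstReturn.fst_ne_of_mem_tail {l : L} {ν : List (VEdge n L)}
    (h : P.IsFirstReturn l ν) : ∀ f ∈ ν.tail, f.1 ≠ l := by
  intro f hf
  obtain ⟨g, hg, hgf⟩ := List.mem_map.1 (h.1.map_fst_tail ▸ List.mem_map_of_mem hf)
  exact hgf ▸ h.2.2 g hg

theorem IsFirstReturn.eq_of_overlap {l : L} {p : List (VEdge n L)} {a k a' k' : ℕ}
    (hk : a + k ≤ p.length) (hk' : a' + k' ≤ p.length)
    (h : P.IsFirstReturn l ((p.drop a).take k)) (h' : P.IsFirstReturn l ((p.drop a').take k'))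
    (ha : a ≤ a') (ha' : a' < a + k) : a = a' ∧ k = k' := by
  obtain rfl : a = a' := by
    by_contra hne
    -- the first edge of the second segment leaves `l` inside the first segment
    have hfst : (p[a']'(by omega)).1 = l := by
      have := h'.1.fst_head h'.2.1
      simpa [List.head_take, List.head_drop] using this
    have hmem : p[a']'(by omega) ∈ ((p.drop a).take k).tail := by
      have : ((p.drop a).take k).tail[a' - a - 1]'(by simp; omega) = p[a']'(by omega) := by
        simp only [List.getElem_tail, List.getElem_take, List.getElem_drop]
        congr 1
        omega
      exact this ▸ List.getElem_mem _
    exact h.fst_ne_of_mem_tail _ hmem hfst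
  have not_proper_prefix : ∀ {m m'}, a + m' ≤ p.length → P.IsFirstReturn l ((p.drop a).take m) →
      P.IsFirstReturn l ((p.drop a).take m') → ¬m < m' := by
    intro m m' hm' hs hl hlt
    have hpre : (p.drop a).take m <+: ((p.drop a).take m').dropLast := by
      rw [List.dropLast_eq_take, List.length_take, List.take_take]
      exact List.take_prefix_take_left (by simp; omega)
    exact hl.2.2 _ (hpre.mem (List.getLast_mem hs.2.1)) (hs.1.getLast_target hs.2.1)
  exact ⟨rfl, by have := not_proper_prefix hk' h h'; have := not_proper_prefix hk h' h; omega⟩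

theorem InstanceAt.of_take_eq {π p p' : List (VEdge n L)} {a k : ℕ}
    (h : P.InstanceAt π p a k) (htake : p.take (a + k) = p'.take (a + k))
    (hlen : a + k ≤ p'.length) : P.InstanceAt π p' a k := by
  obtain ⟨-, hk, D, hI⟩ := h
  have hseg : ∀ q : List (VEdge n L), (q.drop a).take k = (q.take (a + k)).drop a := by
    simp [List.drop_take]
  exact ⟨hlen, hk, D, by rwa [hseg, ← htake, ← hseg]⟩

theorem FPath.exists_contractUpd_eq_card_smul_add {l0 l : L} {π : List (VEdge n L)}
    (hred : P.Reducible l0) (hπ : P.LoopPath l0 l π) (T : Finset (ℕ × ℕ)) {a : L}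
    {p : List (VEdge n L)} (hp : P.FPath a p a) (hT : ∀ q ∈ T, P.InstanceAt π p q.1 q.2) :
    ∃ z ∈ Submodule.span ℕ (P.CFA l0), contractUpd p = T.card • contractUpd π + z := by
  induction T using Finset.induction_on_max_value (α := ℕ) (ι := ℕ × ℕ) (f := Prod.fst)
    generalizing p with
  | empty => exact ⟨_, contractUpd_mem_span_cfa hred hp, by simp⟩
  | insert q T hqT hmax ih =>
    obtain ⟨i, k⟩ := q
    obtain ⟨hik, -, D, hI⟩ := hT (i, k) (Finset.mem_insert_self _ _)
    have hν := hI.isFirstReturn hπ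
    have hsplit : p = p.take i ++ ((p.drop i).take k ++ p.drop (i + k)) := by
      rw [← List.drop_drop, List.take_append_drop, List.take_append_drop]
    rw [hsplit] at hp
    obtain ⟨b, hpre, hrest⟩ := FPath.append_iff.1 hp
    obtain ⟨b', hνb, hsuf⟩ := FPath.append_iff.1 hrest
    obtain ⟨rfl, rfl⟩ := hνb.endpoints_eq_of_ne_nil hν.1 hν.2.1
    have hT' : ∀ q ∈ T, P.InstanceAt π (p.take i ++ p.drop (i + k)) q.1 q.2 := by
      intro q hq
      have hqi := hT q (Finset.mem_insert_of_mem hq)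
      -- `(i, k)` has the largest start, and instances do not overlap
      have hqend : q.1 + q.2 ≤ i := by
        by_contra! hlt
        obtain ⟨h1, h2⟩ := (hqi.2.2.choose_spec.isFirstReturn hπ).eq_of_overlap hqi.1 hik
          hν (hmax q hq) hlt
        exact hqT (Prod.ext h1 h2 ▸ hq)
      refine hqi.of_take_eq ?_ (by simp; omega)
      rw [List.take_append_of_le_length (by simp; omega), List.take_take, min_eq_left hqend]
    obtain ⟨z, hz, hpz⟩ := ih (hpre.append hsuf) hT'
    obtain ⟨w, hw, hνw⟩ := hI.exists_contractUpd_eq_add hred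
    refine ⟨z + w, add_mem hz hw, ?_⟩
    rw [hsplit, Finset.card_insert_of_notMem hqT, succ_nsmul]
    simp only [contractUpd_append] at hpz ⊢
    rw [hνw]
    linear_combination hpz

theorem FPath.exists_contractUpd_eq_numInstances_smul_add {l0 l a : L}
    {π p : List (VEdge n L)} (hred : P.Reducible l0) (hπ : P.LoopPath l0 l π)
    (hp : P.FPath a p a) :
    ∃ z ∈ Submodule.span ℕ (P.CFA l0), contractUpd p = P.numInstances π p • contractUpd π + z := by
  have hfin : {q : ℕ × ℕ | P.InstanceAt π p q.1 q.2}.Finite :=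
    (Set.finite_Iic (p.length, p.length)).subset fun q ⟨hq, _⟩ => ⟨by omega, by omega⟩
  rw [numInstances, Set.ncard_eq_toFinset_card _ hfin]
  exact hp.exists_contractUpd_eq_card_smul_add hred hπ _ fun q hq => hfin.mem_toFinset.1 hq

theorem FinTraceVals.le_add_contractUpd {p : List (VEdge n L)} {vals : ℕ → Valu n}
    (htr : P.FinTraceVals p vals) (j : Fin n) :
    (vals p.length j : ℤ) ≤ vals 0 j + contractUpd p j := by
  induction p generalizing vals with
  | nil => simp
  | cons e p ih =>
    have hstep := htr 0 (by simp) j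
    have hrest := ih (vals := fun m => vals (m + 1)) (fun i hi => htr (i + 1) (by simpa))
    simp only [List.get_eq_getElem, List.getElem_cons_zero] at hstep
    simp only [List.length_cons, contractUpd_cons, Pi.add_apply]
    linarith

end VASS

theorem natCast_le_rankBound {n k : ℕ} {τ : Fin k → Upd n} {y : Fin k → Fin n} {σ0 : Valu n}
    (hneg : ∀ i, τ i (y i) < 0) (hle : ∀ i j : Fin k, i ≤ j → τ j (y i) ≤ 0)
    (c : Fin k → ℕ) (hc : ∀ v, 0 ≤ (σ0 v : ℤ) + (∑ j, c j • τ j) v) (i : Fin k) :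
    (c i : ℚ) ≤ RankBound τ y σ0 i := by
  induction i using WellFoundedLT.induction with
  | _ i ih =>
  set F := Finset.univ.filter (fun j : Fin k => j < i ∧ 0 < τ j (y i))
  -- apart from `τ i` itself, only the `τ j` in `F` can increase `y i`
  have hsplit : ∑ j, (c j : ℤ) * τ j (y i) ≤ ∑ j ∈ F, (c j : ℤ) * τ j (y i) + c i * τ i (y i) := by
    set G := Finset.univ.filter (fun j : Fin k => ¬(j < i ∧ 0 < τ j (y i)))
    have hrest : ∑ j ∈ G.erase i, (c j : ℤ) * τ j (y i) ≤ 0 := by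
      refine Finset.sum_nonpos fun j hj => mul_nonpos_of_nonneg_of_nonpos (by positivity) ?_
      simp only [G, Finset.mem_erase, Finset.mem_filter, Finset.mem_univ, true_and] at hj
      rcases lt_or_gt_of_ne hj.1 with hji | hij
      · exact not_lt.1 fun hpos => hj.2 ⟨hji, hpos⟩
      · exact hle i j hij.le
    have hG := Finset.add_sum_erase G (fun j => (c j : ℤ) * τ j (y i))
      (Finset.mem_filter.2 ⟨Finset.mem_univ i, fun h => lt_irrefl i h.1⟩)
    have hFG := Finset.sum_filter_add_sum_filter_not Finset.univ
      (fun j => j < i ∧ 0 < τ j (y i)) (fun j => (c j : ℤ) * τ j (y i))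
    linarith
  have hci : (c i : ℤ) * -τ i (y i) ≤ σ0 (y i) + ∑ j ∈ F, (c j : ℤ) * τ j (y i) := by
    have hyi := hc (y i)
    rw [Finset.sum_apply] at hyi
    simp only [Pi.smul_apply, nsmul_eq_mul] at hyi
    linarith
  have hk : (0 : ℚ) < ((-τ i (y i) : ℤ) : ℚ) := by exact_mod_cast neg_pos.2 (hneg i)
  rw [RankBound, Finset.sum_attach F (fun j => RankBound τ y σ0 j * (τ j (y i) : ℚ)),
    le_div_iff₀ hk]
  calc (c i : ℚ) * ((-τ i (y i) : ℤ) : ℚ)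
      ≤ σ0 (y i) + ∑ j ∈ F, (c j : ℚ) * τ j (y i) := by exact_mod_cast hci
    _ ≤ σ0 (y i) + ∑ j ∈ F, RankBound τ y σ0 j * τ j (y i) := by
      gcongr with j hj
      · simp only [F, Finset.mem_filter, Finset.mem_univ, true_and] at hj
        exact_mod_cast hj.2.le
      · exact ih j (by simp only [F, Finset.mem_filter] at hj; exact hj.2.1)

theorem bound_is_path_bound_general
    {n : ℕ} {L : Type*} (P : VASS n L) (l0 : L)
    (hred : P.Reducible l0)
    {k : ℕ} (τ : Fin k → Upd n) (y : Fin k → Fin n)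
    (π : Fin k → List (VEdge n L))
    (hπ : ∀ i, ∃ l, P.LoopPath l0 l (π i))
    (hτπ : ∀ i, τ i = VASS.contractUpd (π i))
    (hrank : RankingCondition (P.CFA l0) τ y)
    (σ0 : Valu n) (vals : ℕ → Valu n) (hv0 : vals 0 = σ0)
    (p : List (VEdge n L)) (hp : P.FPath l0 p l0)
    (htr : P.FinTraceVals p vals)
    (i : Fin k) :
    (P.numInstances (π i) p : ℚ) ≤ RankBound τ y σ0 i := by
  obtain ⟨l, hπi⟩ := hπ i
  obtain ⟨-, hrange, hneg, hle⟩ := hrank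
  obtain ⟨z, hz, hpz⟩ := hp.exists_contractUpd_eq_numInstances_smul_add hred hπi
  rw [← hrange, Submodule.mem_span_range_iff_exists_fun] at hz
  obtain ⟨c, rfl⟩ := hz
  set N := P.numInstances (π i) p
  set d : Fin k → ℕ := Pi.single i N + c
  have hcoeff : VASS.contractUpd p = ∑ j, d j • τ j := by
    simp only [d, hpz, ← hτπ, Pi.add_apply, add_smul, Finset.sum_add_distrib, Pi.single_apply,
      ite_smul, zero_smul, Finset.sum_ite_eq', Finset.mem_univ, if_true]
  have hc : ∀ v, 0 ≤ (σ0 v : ℤ) + (∑ j, d j • τ j) v := fun v => by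
    rw [← hcoeff, ← hv0]
    exact (Int.natCast_nonneg _).trans (htr.le_add_contractUpd v)
  calc (N : ℚ) ≤ (d i : ℚ) := by simp [d]
    _ ≤ RankBound τ y σ0 i := natCast_le_rankBound hneg hle _ hc i

/-- Let `P` be a reducible lossy VASS whose control flow graph is a single
SCC with unique entry (and exit) location `l0`, let `τ₁,…,τ_k` enumerate `CFA P` (with `τ i`
the contracted update of the loop-path `π i`) and satisfy the ranking condition together with
the variables `y₁,…,y_k`.  Then for every finite trace of `P` from `(l0, σ0)` back to `l0`,
the underlying path contains at most `Bound(τᵢ)` instances of `π i`; i.e. `Bound(τᵢ)` is a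
path-bound for `π i`. -/
theorem bound_is_path_bound
    {n : ℕ} {L : Type*} [Finite L] (P : VASS n L) (l0 : L)
    (hEfin : P.E.Finite)
    (hreach : ∀ x, ∃ p, P.FPath l0 p x)
    (hcoreach : ∀ x, ∃ p, P.FPath x p l0)
    (hred : P.Reducible l0)
    {k : ℕ} (τ : Fin k → Upd n) (y : Fin k → Fin n)
    (π : Fin k → List (VEdge n L))
    (hπ : ∀ i, ∃ l, P.LoopPath l0 l (π i))
    (hτπ : ∀ i, τ i = VASS.contractUpd (π i))
    (hrank : RankingCondition (P.CFA l0) τ y)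
    (σ0 : Valu n) (vals : ℕ → Valu n) (hv0 : vals 0 = σ0)
    (p : List (VEdge n L)) (hp : P.FPath l0 p l0)
    (htr : P.FinTraceVals p vals)
    (i : Fin k) :
    (P.numInstances (π i) p : ℚ) ≤ RankBound τ y σ0 i :=
  bound_is_path_bound_general P l0 hred τ y π hπ hτπ hrank σ0 vals hv0 p hp htr i
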